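/- Fully discrete energy relation with forcing: if (U^{n+1}, P^{n+1/2}, Q^{n+1}) solves one step of the fully discrete SAV-MAC scheme, then |Q^{n+1}|² − |Q^n|² + ν Δt ‖DU^{n+1/2}‖² = Δt (f₁^{n+1/2}, U₁^{n+1/2})_{l²,T,M} + Δt (f₂^{n+1/2}, U₂^{n+1/2})_{l²,M,T}. -/
import Mathlib


open Finset

noncomputable section

namespace SAVMAC

/-- A staggered-grid function, indexed by (possibly extended) integer indices.
For a `u1`-type function, `f i j` is the value at `(x_i, y_{j+1/2})` (with the
boundary conventions `y_{-1/2} = y_0`, `y_{N_y+1/2} = y_{N_y}` for `j = -1, N_y`).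
For a `u2`-type function, `f i j` is the value at `(x_{i+1/2}, y_j)` (with
`x_{-1/2} = x_0`, `x_{N_x+1/2} = x_{N_x}` for `i = -1, N_x`).
For a cell-centered function, `f i j` is the value at `(x_{i+1/2}, y_{j+1/2})`. -/
abbrev G := ℤ → ℤ → ℝ

/-- The mesh weight `k_j` (`= k` in the interior, `k/2` at the boundary). -/
def kw (Ny : ℕ) (k : ℝ) (j : ℤ) : ℝ := if j = 0 ∨ j = (Ny : ℤ) then k / 2 else k

/-- The mesh weight `h_i`. -/
def hw (Nx : ℕ) (h : ℝ) (i : ℤ) : ℝ := if i = 0 ∨ i = (Nx : ℤ) then h / 2 else h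

/-- The inner product `(f,g)_{l²,M}` of cell-centered functions. -/
def ipM (Nx Ny : ℕ) (h k : ℝ) (f g : G) : ℝ :=
  ∑ i ∈ Finset.range Nx, ∑ j ∈ Finset.range Ny, h * k * f (i : ℤ) (j : ℤ) * g (i : ℤ) (j : ℤ)

/-- The inner product `(f,g)_{l²,T,M}` of `u1`-type functions. -/
def ipTM (Nx Ny : ℕ) (h k : ℝ) (f g : G) : ℝ :=
  ∑ i ∈ Finset.Ico 1 Nx, ∑ j ∈ Finset.range Ny, h * k * f (i : ℤ) (j : ℤ) * g (i : ℤ) (j : ℤ)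

/-- The inner product `(f,g)_{l²,M,T}` of `u2`-type functions. -/
def ipMT (Nx Ny : ℕ) (h k : ℝ) (f g : G) : ℝ :=
  ∑ i ∈ Finset.range Nx, ∑ j ∈ Finset.Ico 1 Ny, h * k * f (i : ℤ) (j : ℤ) * g (i : ℤ) (j : ℤ)

/-- The inner product `(f,g)_{l²,T_y}` of functions living at the nodes `(x_i, y_j)`,
`1 ≤ i ≤ N_x-1`, `0 ≤ j ≤ N_y`. -/
def ipTy (Nx Ny : ℕ) (h k : ℝ) (f g : G) : ℝ :=
  ∑ i ∈ Finset.Ico 1 Nx, ∑ j ∈ Finset.range (Ny + 1), h * kw Ny k j * f (i : ℤ) (j : ℤ) * g (i : ℤ) (j : ℤ)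

/-- The inner product `(f,g)_{l²,T_x}` of functions living at the nodes `(x_i, y_j)`,
`0 ≤ i ≤ N_x`, `1 ≤ j ≤ N_y-1`. -/
def ipTx (Nx Ny : ℕ) (h k : ℝ) (f g : G) : ℝ :=
  ∑ i ∈ Finset.range (Nx + 1), ∑ j ∈ Finset.Ico 1 Ny, hw Nx h i * k * f (i : ℤ) (j : ℤ) * g (i : ℤ) (j : ℤ)

/-- `‖U‖²_{l²}` for a velocity pair. -/
def l2sq (Nx Ny : ℕ) (h k : ℝ) (v1 v2 : G) : ℝ :=
  ipTM Nx Ny h k v1 v1 + ipMT Nx Ny h k v2 v2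

/-- `(U,V)_{l²}` for velocity pairs. -/
def ipl2 (Nx Ny : ℕ) (h k : ℝ) (v1 v2 w1 w2 : G) : ℝ :=
  ipTM Nx Ny h k v1 w1 + ipMT Nx Ny h k v2 w2

/-- `d_x`: half-index difference in `x`, `[d_x f]_{i+1/2,m} = (f_{i+1,m}-f_{i,m})/h`. -/
def dX (h : ℝ) (f : G) : G := fun i j => (f (i + 1) j - f i j) / h

/-- `d_y`: half-index difference in `y`. -/
def dY (k : ℝ) (f : G) : G := fun i j => (f i (j + 1) - f i j) / k

/-- `D_x`: integer-index difference in `x`, `[D_x f]_{i,m} = (f_{i+1/2,m}-f_{i-1/2,m})/h_i`. -/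
def DX (Nx : ℕ) (h : ℝ) (f : G) : G := fun i j => (f i j - f (i - 1) j) / hw Nx h i

/-- `D_y`: integer-index difference in `y`. -/
def DY (Ny : ℕ) (k : ℝ) (f : G) : G := fun i j => (f i j - f i (j - 1)) / kw Ny k j

/-- `D_x(d_x f)` at a `u1`-node. -/
def DXdX (h : ℝ) (f : G) : G := fun i j => (f (i + 1) j - 2 * f i j + f (i - 1) j) / h ^ 2

/-- `d_y(D_y f)` at a `u1`-node (with the half-cell convention at the boundary). -/
def dYDY (Ny : ℕ) (k : ℝ) (f : G) : G := fun i j => (DY Ny k f i (j + 1) - DY Ny k f i j) / k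

/-- `D_y(d_y f)` at a `u2`-node. -/
def DYdY (k : ℝ) (f : G) : G := fun i j => (f i (j + 1) - 2 * f i j + f i (j - 1)) / k ^ 2

/-- `d_x(D_x f)` at a `u2`-node (with the half-cell convention at the boundary). -/
def dXDX (Nx : ℕ) (h : ℝ) (f : G) : G := fun i j => (DX Nx h f (i + 1) j - DX Nx h f i j) / h

/-- `‖DU‖²` for a velocity pair. -/
def Dsq (Nx Ny : ℕ) (h k : ℝ) (v1 v2 : G) : ℝ :=
  ipM Nx Ny h k (dX h v1) (dX h v1) + ipTy Nx Ny h k (DY Ny k v1) (DY Ny k v1)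
    + ipTx Nx Ny h k (DX Nx h v2) (DX Nx h v2) + ipM Nx Ny h k (dY k v2) (dY k v2)

/-- Homogeneous Dirichlet boundary conditions for a staggered velocity pair. -/
def BC (Nx Ny : ℕ) (v1 v2 : G) : Prop :=
  (∀ j : ℤ, v1 0 j = 0 ∧ v1 (Nx : ℤ) j = 0) ∧
  (∀ i : ℤ, v1 i (-1) = 0 ∧ v1 i (Ny : ℤ) = 0) ∧
  (∀ j : ℤ, v2 (-1) j = 0 ∧ v2 (Nx : ℤ) j = 0) ∧
  (∀ i : ℤ, v2 i 0 = 0 ∧ v2 i (Ny : ℤ) = 0)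

/-- Discrete incompressibility `d_x v1 + d_y v2 = 0` at all cell centers. -/
def DivFree (Nx Ny : ℕ) (h k : ℝ) (v1 v2 : G) : Prop :=
  ∀ i j : ℤ, 0 ≤ i → i < (Nx : ℤ) → 0 ≤ j → j < (Ny : ℤ) →
    dX h v1 i j + dY k v2 i j = 0

/-- The value of the bilinear interpolant `P_h f` of a `u1`-type function at the integer
node `(x_i, y_j)` (respecting the boundary half-cells). -/
def avgY (Ny : ℕ) (f : G) : G := fun i j =>
  if j = 0 then f i (-1) else if j = (Ny : ℤ) then f i (Ny : ℤ) else (f i (j - 1) + f i j) / 2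

/-- The value of the bilinear interpolant `P_h f` of a `u2`-type function at the integer
node `(x_i, y_j)` (respecting the boundary half-cells). -/
def avgX (Nx : ℕ) (f : G) : G := fun i j =>
  if i = 0 then f (-1) j else if i = (Nx : ℤ) then f (Nx : ℤ) j else (f (i - 1) j + f i j) / 2

/-- First component of the explicit nonlinear term
`Ũ₁ D_x(P_h Ũ₁) + P_h Ũ₂ d_y(P_h Ũ₁)` at the `u1`-node `(x_i, y_{j+1/2})`. -/
def N1 (Ny : ℕ) (h k : ℝ) (w1 w2 : G) : G := fun i j =>
  w1 i j * ((w1 (i + 1) j - w1 (i - 1) j) / (2 * h)) +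
    ((w2 (i - 1) j + w2 i j + w2 (i - 1) (j + 1) + w2 i (j + 1)) / 4) *
      ((avgY Ny w1 i (j + 1) - avgY Ny w1 i j) / k)

/-- Second component of the explicit nonlinear term
`P_h Ũ₁ d_x(P_h Ũ₂) + Ũ₂ D_y(P_h Ũ₂)` at the `u2`-node `(x_{i+1/2}, y_j)`. -/
def N2 (Nx : ℕ) (h k : ℝ) (w1 w2 : G) : G := fun i j =>
  ((w1 i (j - 1) + w1 (i + 1) (j - 1) + w1 i j + w1 (i + 1) j) / 4) *
      ((avgX Nx w2 (i + 1) j - avgX Nx w2 i j) / h) +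
    w2 i j * ((w2 i (j + 1) - w2 i (j - 1)) / (2 * k))

/-- `B^{n+1/2} = √(E_h(Ũ^{n+1/2}) + δ)`. -/
def Bh (Nx Ny : ℕ) (h k δ : ℝ) (w1 w2 : G) : ℝ :=
  Real.sqrt (l2sq Nx Ny h k w1 w2 / 2 + δ)

/-- One step of the fully discrete SAV-MAC scheme: given the extrapolated velocity
`Ũ^{n+1/2} = (w1,w2)`, the old velocity `U^n = (u1,u2)` and old SAV value `Qn`, the
data `f^{n+1/2} = (f1,f2)`, the new iterate `U^{n+1} = (v1,v2)`, `P^{n+1/2} = P`,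
`Q^{n+1} = Qn1` satisfies the momentum equations, the SAV update, discrete
incompressibility and the boundary conditions; moreover `Q^{n+1/2} ≠ 0`. -/
def SchemeStep (Nx Ny : ℕ) (h k Δt ν δ : ℝ) (f1 f2 w1 w2 u1 u2 v1 v2 P : G)
    (Qn Qn1 : ℝ) : Prop :=
  (Qn + Qn1) / 2 ≠ 0 ∧
  (∀ i j : ℤ, 1 ≤ i → i < (Nx : ℤ) → 0 ≤ j → j < (Ny : ℤ) →
    (v1 i j - u1 i j) / Δt
      + ((Qn + Qn1) / 2 / Bh Nx Ny h k δ w1 w2) * N1 Ny h k w1 w2 i j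
      - ν * DXdX h (fun a b => (u1 a b + v1 a b) / 2) i j
      - ν * dYDY Ny k (fun a b => (u1 a b + v1 a b) / 2) i j
      + DX Nx h P i j = f1 i j) ∧
  (∀ i j : ℤ, 0 ≤ i → i < (Nx : ℤ) → 1 ≤ j → j < (Ny : ℤ) →
    (v2 i j - u2 i j) / Δt
      + ((Qn + Qn1) / 2 / Bh Nx Ny h k δ w1 w2) * N2 Nx h k w1 w2 i j
      - ν * DYdY k (fun a b => (u2 a b + v2 a b) / 2) i j
      - ν * dXDX Nx h (fun a b => (u2 a b + v2 a b) / 2) i j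
      + DY Ny k P i j = f2 i j) ∧
  ((Qn1 - Qn) / Δt
      = (1 / (2 * Bh Nx Ny h k δ w1 w2)) *
          ipl2 Nx Ny h k (N1 Ny h k w1 w2) (N2 Nx h k w1 w2)
            (fun a b => (u1 a b + v1 a b) / 2) (fun a b => (u2 a b + v2 a b) / 2)
        + (1 / (2 * ((Qn + Qn1) / 2))) *
          ipl2 Nx Ny h k (fun a b => (v1 a b - u1 a b) / Δt) (fun a b => (v2 a b - u2 a b) / Δt)
            (fun a b => (u1 a b + v1 a b) / 2) (fun a b => (u2 a b + v2 a b) / 2)) ∧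
  DivFree Nx Ny h k v1 v2 ∧
  BC Nx Ny v1 v2


private lemma abel_Ico (n : ℕ) (P f : ℤ → ℝ) :
    ∑ i ∈ Finset.Ico 1 (n+1), (P (i:ℤ) - P ((i:ℤ)-1)) * f (i:ℤ)
      = P (n:ℤ) * f ((n:ℤ)+1) - P 0 * f 0
        - ∑ i ∈ Finset.range (n+1), P (i:ℤ) * (f ((i:ℤ)+1) - f (i:ℤ)) := by
  induction n with
  | zero => simp; ring
  | succ m ih =>
      rw [Finset.sum_Ico_succ_top (by omega), Finset.sum_range_succ
        (f := fun i => P (i:ℤ) * (f ((i:ℤ)+1) - f (i:ℤ))) (n := m+1), ih]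
      push_cast
      simp only [add_sub_cancel_right]
      ring

private lemma abel_range (n : ℕ) (g f : ℤ → ℝ) :
    ∑ j ∈ Finset.range n, (g ((j:ℤ)+1) - g (j:ℤ)) * f (j:ℤ)
      = g (n:ℤ) * f (n:ℤ) - g 0 * f (-1)
        - ∑ j ∈ Finset.range (n+1), g (j:ℤ) * (f (j:ℤ) - f ((j:ℤ)-1)) := by
  induction n with
  | zero => simp; ring
  | succ m ih =>
      rw [Finset.sum_range_succ, Finset.sum_range_succ
        (f := fun j => g (j:ℤ) * (f (j:ℤ) - f ((j:ℤ)-1))) (n := m+1), ih]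
      push_cast
      simp only [add_sub_cancel_right]
      ring

private lemma sbp_grad (N : ℕ) (hN : 1 ≤ N) (P f : ℤ → ℝ)
    (h0 : f 0 = 0) (hB : f (N:ℤ) = 0) :
    ∑ i ∈ Finset.Ico 1 N, (P (i:ℤ) - P ((i:ℤ)-1)) * f (i:ℤ)
      = -∑ i ∈ Finset.range N, P (i:ℤ) * (f ((i:ℤ)+1) - f (i:ℤ)) := by
  obtain ⟨n, rfl⟩ : ∃ n, N = n + 1 := ⟨N - 1, by omega⟩
  push_cast at hB
  rw [abel_Ico, hB, h0]
  ring

private lemma sbp_w (N : ℕ) (g f : ℤ → ℝ) (h0 : f (-1) = 0) (hB : f (N:ℤ) = 0) :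
    ∑ j ∈ Finset.range N, (g ((j:ℤ)+1) - g (j:ℤ)) * f (j:ℤ)
      = -∑ j ∈ Finset.range (N+1), g (j:ℤ) * (f (j:ℤ) - f ((j:ℤ)-1)) := by
  rw [abel_range, h0, hB]
  ring

private lemma sbp_lap (N : ℕ) (hN : 1 ≤ N) (f : ℤ → ℝ)
    (h0 : f 0 = 0) (hB : f (N:ℤ) = 0) :
    ∑ i ∈ Finset.Ico 1 N, (f ((i:ℤ)+1) - 2*f (i:ℤ) + f ((i:ℤ)-1)) * f (i:ℤ)
      = -∑ i ∈ Finset.range N, (f ((i:ℤ)+1) - f (i:ℤ))^2 := by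
  have key := sbp_grad N hN (fun i => f (i+1) - f i) f h0 hB
  simp only [sub_add_cancel] at key
  calc ∑ i ∈ Finset.Ico 1 N, (f ((i:ℤ)+1) - 2*f (i:ℤ) + f ((i:ℤ)-1)) * f (i:ℤ)
      = ∑ i ∈ Finset.Ico 1 N, (f ((i:ℤ)+1) - f (i:ℤ) - (f (i:ℤ) - f ((i:ℤ)-1))) * f (i:ℤ) := by
        refine Finset.sum_congr rfl fun i _ => by ring
    _ = -∑ i ∈ Finset.range N, (f ((i:ℤ)+1) - f (i:ℤ)) * (f ((i:ℤ)+1) - f (i:ℤ)) := key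
    _ = -∑ i ∈ Finset.range N, (f ((i:ℤ)+1) - f (i:ℤ))^2 := by
        rw [neg_inj]; exact Finset.sum_congr rfl fun i _ => (sq _).symm

private lemma kw_ne (Ny : ℕ) {k : ℝ} (hk : k ≠ 0) (j : ℤ) : kw Ny k j ≠ 0 := by
  unfold kw; split
  · exact div_ne_zero hk two_ne_zero
  · exact hk

private lemma hw_ne (Nx : ℕ) {h : ℝ} (hh : h ≠ 0) (i : ℤ) : hw Nx h i ≠ 0 := by
  unfold hw; split
  · exact div_ne_zero hh two_ne_zero
  · exact hh

private lemma kw_int (Ny : ℕ) (k : ℝ) {j : ℤ} (h1 : j ≠ 0) (h2 : j ≠ (Ny:ℤ)) :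
    kw Ny k j = k := by
  unfold kw; rw [if_neg]; tauto

private lemma hw_int (Nx : ℕ) (h : ℝ) {i : ℤ} (h1 : i ≠ 0) (h2 : i ≠ (Nx:ℤ)) :
    hw Nx h i = h := by
  unfold hw; rw [if_neg]; tauto

end SAVMAC

/-- **Fully discrete energy relation with forcing** (identity (2.35)): if
`(U^{n+1}, P^{n+1/2}, Q^{n+1})` solves one step of the fully discrete SAV-MAC scheme, then
`|Q^{n+1}|² - |Q^n|² + ν Δt ‖DU^{n+1/2}‖²
  = Δt (f₁^{n+1/2}, U₁^{n+1/2})_{l²,T,M} + Δt (f₂^{n+1/2}, U₂^{n+1/2})_{l²,M,T}`. -/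
theorem SAVMAC.fully_discrete_energy_relation
    (Nx Ny : ℕ) (hNx : 1 ≤ Nx) (hNy : 1 ≤ Ny)
    (h k Δt ν δ : ℝ) (hh : 0 < h) (hk : 0 < k) (hΔt : 0 < Δt) (hν : 0 < ν) (hδ : 0 < δ)
    (f1 f2 um1 um2 u1 u2 v1 v2 P : SAVMAC.G) (Qn Qn1 : ℝ)
    (hBCprev : SAVMAC.BC Nx Ny um1 um2)
    (hBCn : SAVMAC.BC Nx Ny u1 u2)
    (hdivn : SAVMAC.DivFree Nx Ny h k u1 u2)
    (hstep : SAVMAC.SchemeStep Nx Ny h k Δt ν δ f1 f2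
      (fun i j => (3 * u1 i j - um1 i j) / 2) (fun i j => (3 * u2 i j - um2 i j) / 2)
      u1 u2 v1 v2 P Qn Qn1) :
    |Qn1| ^ 2 - |Qn| ^ 2
      + ν * Δt * SAVMAC.Dsq Nx Ny h k
          (fun i j => (u1 i j + v1 i j) / 2) (fun i j => (u2 i j + v2 i j) / 2)
      = Δt * SAVMAC.ipTM Nx Ny h k f1 (fun i j => (u1 i j + v1 i j) / 2)
        + Δt * SAVMAC.ipMT Nx Ny h k f2 (fun i j => (u2 i j + v2 i j) / 2) := by
  classical
  have hh' : h ≠ 0 := ne_of_gt hh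
  have hk' : k ≠ 0 := ne_of_gt hk
  have hdt' : Δt ≠ 0 := ne_of_gt hΔt
  obtain ⟨hQ0, hmom1, hmom2, hSAV, hdiv, hBCv⟩ := hstep
  obtain ⟨hu1x, hu1y, hu2x, hu2y⟩ := hBCn
  obtain ⟨hv1x, hv1y, hv2x, hv2y⟩ := hBCv
  set W1 : G := fun i j => (3 * u1 i j - um1 i j) / 2 with hW1def
  set W2 : G := fun i j => (3 * u2 i j - um2 i j) / 2 with hW2def
  set m1 : G := fun i j => (u1 i j + v1 i j) / 2 with hm1def
  set m2 : G := fun i j => (u2 i j + v2 i j) / 2 with hm2def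
  set B : ℝ := Bh Nx Ny h k δ W1 W2 with hBdef
  set Q' : ℝ := (Qn + Qn1) / 2 with hQdef
  have hQne : Q' ≠ 0 := hQ0
  -- positivity of B
  have hB0 : B ≠ 0 := by
    have h1 : 0 ≤ l2sq Nx Ny h k W1 W2 := by
      unfold l2sq ipTM ipMT
      have hterm : ∀ (f : G) (i j : ℤ), 0 ≤ h * k * f i j * f i j := by
        intro f i j
        nlinarith [mul_pos hh hk, mul_self_nonneg (f i j)]
      have s1 : 0 ≤ ∑ i ∈ Finset.Ico 1 Nx, ∑ j ∈ Finset.range Ny,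
          h * k * W1 (i:ℤ) (j:ℤ) * W1 (i:ℤ) (j:ℤ) :=
        Finset.sum_nonneg fun i _ => Finset.sum_nonneg fun j _ => hterm W1 _ _
      have s2 : 0 ≤ ∑ i ∈ Finset.range Nx, ∑ j ∈ Finset.Ico 1 Ny,
          h * k * W2 (i:ℤ) (j:ℤ) * W2 (i:ℤ) (j:ℤ) :=
        Finset.sum_nonneg fun i _ => Finset.sum_nonneg fun j _ => hterm W2 _ _
      linarith
    have : 0 < B := by
      rw [hBdef]
      unfold Bh
      exact Real.sqrt_pos.mpr (by linarith)
    exact ne_of_gt this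
  -- boundary conditions for the midpoint velocity
  have hm1x : ∀ j : ℤ, m1 0 j = 0 ∧ m1 (Nx:ℤ) j = 0 := fun j => by
    constructor <;> simp [hm1def, (hu1x j).1, (hu1x j).2, (hv1x j).1, (hv1x j).2]
  have hm1y : ∀ i : ℤ, m1 i (-1) = 0 ∧ m1 i (Ny:ℤ) = 0 := fun i => by
    constructor <;> simp [hm1def, (hu1y i).1, (hu1y i).2, (hv1y i).1, (hv1y i).2]
  have hm2x : ∀ j : ℤ, m2 (-1) j = 0 ∧ m2 (Nx:ℤ) j = 0 := fun j => by
    constructor <;> simp [hm2def, (hu2x j).1, (hu2x j).2, (hv2x j).1, (hv2x j).2]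
  have hm2y : ∀ i : ℤ, m2 i 0 = 0 ∧ m2 i (Ny:ℤ) = 0 := fun i => by
    constructor <;> simp [hm2def, (hu2y i).1, (hu2y i).2, (hv2y i).1, (hv2y i).2]
  -- discrete divergence-freeness of the midpoint velocity
  have hdivm : ∀ i j : ℤ, 0 ≤ i → i < (Nx:ℤ) → 0 ≤ j → j < (Ny:ℤ) →
      dX h m1 i j + dY k m2 i j = 0 := by
    intro i j h1 h2 h3 h4
    have a := hdivn i j h1 h2 h3 h4
    have b := hdiv i j h1 h2 h3 h4
    simp only [dX, dY, hm1def, hm2def] at a b ⊢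
    field_simp at a b ⊢
    linarith
  -- momentum equation 1 tested against m1
  have hE1 : ipTM Nx Ny h k (fun a b => (v1 a b - u1 a b) / Δt) m1
      + Q' / B * ipTM Nx Ny h k (N1 Ny h k W1 W2) m1
      - ν * ipTM Nx Ny h k (DXdX h m1) m1
      - ν * ipTM Nx Ny h k (dYDY Ny k m1) m1
      + ipTM Nx Ny h k (DX Nx h P) m1
      = ipTM Nx Ny h k f1 m1 := by
    unfold ipTM
    simp only [Finset.mul_sum, ← Finset.sum_add_distrib, ← Finset.sum_sub_distrib]
    refine Finset.sum_congr rfl fun i hi => Finset.sum_congr rfl fun j hj => ?_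
    rw [Finset.mem_Ico] at hi
    rw [Finset.mem_range] at hj
    have hm := hmom1 (i:ℤ) (j:ℤ) (by omega) (by omega) (by omega) (by omega)
    beta_reduce
    linear_combination (h * k * m1 (i:ℤ) (j:ℤ)) * hm
  -- momentum equation 2 tested against m2
  have hE2 : ipMT Nx Ny h k (fun a b => (v2 a b - u2 a b) / Δt) m2
      + Q' / B * ipMT Nx Ny h k (N2 Nx h k W1 W2) m2
      - ν * ipMT Nx Ny h k (DYdY k m2) m2
      - ν * ipMT Nx Ny h k (dXDX Nx h m2) m2
      + ipMT Nx Ny h k (DY Ny k P) m2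
      = ipMT Nx Ny h k f2 m2 := by
    unfold ipMT
    simp only [Finset.mul_sum, ← Finset.sum_add_distrib, ← Finset.sum_sub_distrib]
    refine Finset.sum_congr rfl fun i hi => Finset.sum_congr rfl fun j hj => ?_
    rw [Finset.mem_range] at hi
    rw [Finset.mem_Ico] at hj
    have hm := hmom2 (i:ℤ) (j:ℤ) (by omega) (by omega) (by omega) (by omega)
    beta_reduce
    linear_combination (h * k * m2 (i:ℤ) (j:ℤ)) * hm
  -- summation by parts: x-viscous term for m1
  have hA1 : ipTM Nx Ny h k (DXdX h m1) m1 = -ipM Nx Ny h k (dX h m1) (dX h m1) := by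
    unfold ipTM ipM
    rw [Finset.sum_comm]
    conv_rhs => rw [Finset.sum_comm]
    rw [← Finset.sum_neg_distrib]
    refine Finset.sum_congr rfl fun j _ => ?_
    have key := sbp_lap Nx hNx (fun i => m1 i (j:ℤ)) (hm1x (j:ℤ)).1 (hm1x (j:ℤ)).2
    have lhs_eq : ∑ i ∈ Finset.Ico 1 Nx, h * k * DXdX h m1 (i:ℤ) (j:ℤ) * m1 (i:ℤ) (j:ℤ)
        = (k/h) * ∑ i ∈ Finset.Ico 1 Nx,
            (m1 ((i:ℤ)+1) (j:ℤ) - 2*m1 (i:ℤ) (j:ℤ) + m1 ((i:ℤ)-1) (j:ℤ)) * m1 (i:ℤ) (j:ℤ) := by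
      rw [Finset.mul_sum]
      refine Finset.sum_congr rfl fun i _ => ?_
      simp only [DXdX]
      field_simp
    have rhs_eq : ∑ i ∈ Finset.range Nx, h * k * dX h m1 (i:ℤ) (j:ℤ) * dX h m1 (i:ℤ) (j:ℤ)
        = (k/h) * ∑ i ∈ Finset.range Nx, (m1 ((i:ℤ)+1) (j:ℤ) - m1 (i:ℤ) (j:ℤ))^2 := by
      rw [Finset.mul_sum]
      refine Finset.sum_congr rfl fun i _ => ?_
      simp only [dX]
      field_simp
    rw [lhs_eq, rhs_eq,
      show (∑ i ∈ Finset.Ico 1 Nx,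
          (m1 ((i:ℤ)+1) (j:ℤ) - 2*m1 (i:ℤ) (j:ℤ) + m1 ((i:ℤ)-1) (j:ℤ)) * m1 (i:ℤ) (j:ℤ))
        = -∑ i ∈ Finset.range Nx, (m1 ((i:ℤ)+1) (j:ℤ) - m1 (i:ℤ) (j:ℤ))^2 from key]
    ring
  -- summation by parts: y-viscous term for m1
  have hA2 : ipTM Nx Ny h k (dYDY Ny k m1) m1
      = -ipTy Nx Ny h k (DY Ny k m1) (DY Ny k m1) := by
    unfold ipTM ipTy
    rw [← Finset.sum_neg_distrib]
    refine Finset.sum_congr rfl fun i _ => ?_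
    have key := sbp_w Ny (fun j => DY Ny k m1 (i:ℤ) j) (fun j => m1 (i:ℤ) j)
      (hm1y (i:ℤ)).1 (hm1y (i:ℤ)).2
    have lhs_eq : ∑ j ∈ Finset.range Ny, h * k * dYDY Ny k m1 (i:ℤ) (j:ℤ) * m1 (i:ℤ) (j:ℤ)
        = h * ∑ j ∈ Finset.range Ny,
            (DY Ny k m1 (i:ℤ) ((j:ℤ)+1) - DY Ny k m1 (i:ℤ) (j:ℤ)) * m1 (i:ℤ) (j:ℤ) := by
      rw [Finset.mul_sum]
      refine Finset.sum_congr rfl fun j _ => ?_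
      simp only [dYDY]
      field_simp
    have rhs_eq : ∑ j ∈ Finset.range (Ny+1),
          h * kw Ny k (j:ℤ) * DY Ny k m1 (i:ℤ) (j:ℤ) * DY Ny k m1 (i:ℤ) (j:ℤ)
        = h * ∑ j ∈ Finset.range (Ny+1),
            DY Ny k m1 (i:ℤ) (j:ℤ) * (m1 (i:ℤ) (j:ℤ) - m1 (i:ℤ) ((j:ℤ)-1)) := by
      rw [Finset.mul_sum]
      refine Finset.sum_congr rfl fun j _ => ?_
      have e : m1 (i:ℤ) (j:ℤ) - m1 (i:ℤ) ((j:ℤ)-1)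
          = kw Ny k (j:ℤ) * DY Ny k m1 (i:ℤ) (j:ℤ) := by
        simp only [DY]
        field_simp [kw_ne Ny hk' (j:ℤ)]
      rw [e]
      ring
    rw [lhs_eq, rhs_eq,
      show (∑ j ∈ Finset.range Ny,
          (DY Ny k m1 (i:ℤ) ((j:ℤ)+1) - DY Ny k m1 (i:ℤ) (j:ℤ)) * m1 (i:ℤ) (j:ℤ))
        = -∑ j ∈ Finset.range (Ny+1),
            DY Ny k m1 (i:ℤ) (j:ℤ) * (m1 (i:ℤ) (j:ℤ) - m1 (i:ℤ) ((j:ℤ)-1)) from key]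
    ring
  -- summation by parts: y-viscous term for m2
  have hA3 : ipMT Nx Ny h k (DYdY k m2) m2 = -ipM Nx Ny h k (dY k m2) (dY k m2) := by
    unfold ipMT ipM
    rw [← Finset.sum_neg_distrib]
    refine Finset.sum_congr rfl fun i _ => ?_
    have key := sbp_lap Ny hNy (fun j => m2 (i:ℤ) j) (hm2y (i:ℤ)).1 (hm2y (i:ℤ)).2
    have lhs_eq : ∑ j ∈ Finset.Ico 1 Ny, h * k * DYdY k m2 (i:ℤ) (j:ℤ) * m2 (i:ℤ) (j:ℤ)
        = (h/k) * ∑ j ∈ Finset.Ico 1 Ny,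
            (m2 (i:ℤ) ((j:ℤ)+1) - 2*m2 (i:ℤ) (j:ℤ) + m2 (i:ℤ) ((j:ℤ)-1)) * m2 (i:ℤ) (j:ℤ) := by
      rw [Finset.mul_sum]
      refine Finset.sum_congr rfl fun j _ => ?_
      simp only [DYdY]
      field_simp
    have rhs_eq : ∑ j ∈ Finset.range Ny, h * k * dY k m2 (i:ℤ) (j:ℤ) * dY k m2 (i:ℤ) (j:ℤ)
        = (h/k) * ∑ j ∈ Finset.range Ny, (m2 (i:ℤ) ((j:ℤ)+1) - m2 (i:ℤ) (j:ℤ))^2 := by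
      rw [Finset.mul_sum]
      refine Finset.sum_congr rfl fun j _ => ?_
      simp only [dY]
      field_simp
    rw [lhs_eq, rhs_eq,
      show (∑ j ∈ Finset.Ico 1 Ny,
          (m2 (i:ℤ) ((j:ℤ)+1) - 2*m2 (i:ℤ) (j:ℤ) + m2 (i:ℤ) ((j:ℤ)-1)) * m2 (i:ℤ) (j:ℤ))
        = -∑ j ∈ Finset.range Ny, (m2 (i:ℤ) ((j:ℤ)+1) - m2 (i:ℤ) (j:ℤ))^2 from key]
    ring
  -- summation by parts: x-viscous term for m2
  have hA4 : ipMT Nx Ny h k (dXDX Nx h m2) m2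
      = -ipTx Nx Ny h k (DX Nx h m2) (DX Nx h m2) := by
    unfold ipMT ipTx
    rw [Finset.sum_comm]
    conv_rhs => rw [Finset.sum_comm]
    rw [← Finset.sum_neg_distrib]
    refine Finset.sum_congr rfl fun j _ => ?_
    have key := sbp_w Nx (fun i => DX Nx h m2 i (j:ℤ)) (fun i => m2 i (j:ℤ))
      (hm2x (j:ℤ)).1 (hm2x (j:ℤ)).2
    have lhs_eq : ∑ i ∈ Finset.range Nx, h * k * dXDX Nx h m2 (i:ℤ) (j:ℤ) * m2 (i:ℤ) (j:ℤ)
        = k * ∑ i ∈ Finset.range Nx,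
            (DX Nx h m2 ((i:ℤ)+1) (j:ℤ) - DX Nx h m2 (i:ℤ) (j:ℤ)) * m2 (i:ℤ) (j:ℤ) := by
      rw [Finset.mul_sum]
      refine Finset.sum_congr rfl fun i _ => ?_
      simp only [dXDX]
      field_simp
    have rhs_eq : ∑ i ∈ Finset.range (Nx+1),
          hw Nx h (i:ℤ) * k * DX Nx h m2 (i:ℤ) (j:ℤ) * DX Nx h m2 (i:ℤ) (j:ℤ)
        = k * ∑ i ∈ Finset.range (Nx+1),
            DX Nx h m2 (i:ℤ) (j:ℤ) * (m2 (i:ℤ) (j:ℤ) - m2 ((i:ℤ)-1) (j:ℤ)) := by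
      rw [Finset.mul_sum]
      refine Finset.sum_congr rfl fun i _ => ?_
      have e : m2 (i:ℤ) (j:ℤ) - m2 ((i:ℤ)-1) (j:ℤ)
          = hw Nx h (i:ℤ) * DX Nx h m2 (i:ℤ) (j:ℤ) := by
        simp only [DX]
        field_simp [hw_ne Nx hh' (i:ℤ)]
      rw [e]
      ring
    rw [lhs_eq, rhs_eq,
      show (∑ i ∈ Finset.range Nx,
          (DX Nx h m2 ((i:ℤ)+1) (j:ℤ) - DX Nx h m2 (i:ℤ) (j:ℤ)) * m2 (i:ℤ) (j:ℤ))
        = -∑ i ∈ Finset.range (Nx+1),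
            DX Nx h m2 (i:ℤ) (j:ℤ) * (m2 (i:ℤ) (j:ℤ) - m2 ((i:ℤ)-1) (j:ℤ)) from key]
    ring
  -- pressure term, x-part
  have hCx : ipTM Nx Ny h k (DX Nx h P) m1 = -ipM Nx Ny h k P (dX h m1) := by
    unfold ipTM ipM
    rw [Finset.sum_comm]
    conv_rhs => rw [Finset.sum_comm]
    rw [← Finset.sum_neg_distrib]
    refine Finset.sum_congr rfl fun j _ => ?_
    have key := sbp_grad Nx hNx (fun i => P i (j:ℤ)) (fun i => m1 i (j:ℤ))
      (hm1x (j:ℤ)).1 (hm1x (j:ℤ)).2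
    have lhs_eq : ∑ i ∈ Finset.Ico 1 Nx, h * k * DX Nx h P (i:ℤ) (j:ℤ) * m1 (i:ℤ) (j:ℤ)
        = k * ∑ i ∈ Finset.Ico 1 Nx, (P (i:ℤ) (j:ℤ) - P ((i:ℤ)-1) (j:ℤ)) * m1 (i:ℤ) (j:ℤ) := by
      rw [Finset.mul_sum]
      refine Finset.sum_congr rfl fun i hi => ?_
      rw [Finset.mem_Ico] at hi
      have e1 : (i:ℤ) ≠ 0 := by omega
      have e2 : (i:ℤ) ≠ (Nx:ℤ) := by omega
      simp only [DX, hw_int Nx h e1 e2]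
      field_simp
    have rhs_eq : ∑ i ∈ Finset.range Nx, h * k * P (i:ℤ) (j:ℤ) * dX h m1 (i:ℤ) (j:ℤ)
        = k * ∑ i ∈ Finset.range Nx, P (i:ℤ) (j:ℤ) * (m1 ((i:ℤ)+1) (j:ℤ) - m1 (i:ℤ) (j:ℤ)) := by
      rw [Finset.mul_sum]
      refine Finset.sum_congr rfl fun i _ => ?_
      simp only [dX]
      field_simp
    rw [lhs_eq, rhs_eq,
      show (∑ i ∈ Finset.Ico 1 Nx, (P (i:ℤ) (j:ℤ) - P ((i:ℤ)-1) (j:ℤ)) * m1 (i:ℤ) (j:ℤ))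
        = -∑ i ∈ Finset.range Nx, P (i:ℤ) (j:ℤ) * (m1 ((i:ℤ)+1) (j:ℤ) - m1 (i:ℤ) (j:ℤ)) from key]
    ring
  -- pressure term, y-part
  have hCy : ipMT Nx Ny h k (DY Ny k P) m2 = -ipM Nx Ny h k P (dY k m2) := by
    unfold ipMT ipM
    rw [← Finset.sum_neg_distrib]
    refine Finset.sum_congr rfl fun i _ => ?_
    have key := sbp_grad Ny hNy (fun j => P (i:ℤ) j) (fun j => m2 (i:ℤ) j)
      (hm2y (i:ℤ)).1 (hm2y (i:ℤ)).2
    have lhs_eq : ∑ j ∈ Finset.Ico 1 Ny, h * k * DY Ny k P (i:ℤ) (j:ℤ) * m2 (i:ℤ) (j:ℤ)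
        = h * ∑ j ∈ Finset.Ico 1 Ny, (P (i:ℤ) (j:ℤ) - P (i:ℤ) ((j:ℤ)-1)) * m2 (i:ℤ) (j:ℤ) := by
      rw [Finset.mul_sum]
      refine Finset.sum_congr rfl fun j hj => ?_
      rw [Finset.mem_Ico] at hj
      have e1 : (j:ℤ) ≠ 0 := by omega
      have e2 : (j:ℤ) ≠ (Ny:ℤ) := by omega
      simp only [DY, kw_int Ny k e1 e2]
      field_simp
    have rhs_eq : ∑ j ∈ Finset.range Ny, h * k * P (i:ℤ) (j:ℤ) * dY k m2 (i:ℤ) (j:ℤ)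
        = h * ∑ j ∈ Finset.range Ny, P (i:ℤ) (j:ℤ) * (m2 (i:ℤ) ((j:ℤ)+1) - m2 (i:ℤ) (j:ℤ)) := by
      rw [Finset.mul_sum]
      refine Finset.sum_congr rfl fun j _ => ?_
      simp only [dY]
      field_simp
    rw [lhs_eq, rhs_eq,
      show (∑ j ∈ Finset.Ico 1 Ny, (P (i:ℤ) (j:ℤ) - P (i:ℤ) ((j:ℤ)-1)) * m2 (i:ℤ) (j:ℤ))
        = -∑ j ∈ Finset.range Ny, P (i:ℤ) (j:ℤ) * (m2 (i:ℤ) ((j:ℤ)+1) - m2 (i:ℤ) (j:ℤ)) from key]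
    ring
  -- total pressure contribution vanishes
  have hC : ipTM Nx Ny h k (DX Nx h P) m1 + ipMT Nx Ny h k (DY Ny k P) m2 = 0 := by
    rw [hCx, hCy]
    have hz : ipM Nx Ny h k P (dX h m1) + ipM Nx Ny h k P (dY k m2) = 0 := by
      unfold ipM
      rw [← Finset.sum_add_distrib]
      refine Finset.sum_eq_zero fun i hi => ?_
      rw [← Finset.sum_add_distrib]
      refine Finset.sum_eq_zero fun j hj => ?_
      rw [Finset.mem_range] at hi hj
      have hd := hdivm (i:ℤ) (j:ℤ) (by omega) (by omega) (by omega) (by omega)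
      linear_combination (h * k * P (i:ℤ) (j:ℤ)) * hd
    linarith
  -- SAV relation
  simp only [ipl2] at hSAV
  set X : ℝ := ipTM Nx Ny h k (N1 Ny h k W1 W2) m1 with hXdef
  set Y : ℝ := ipMT Nx Ny h k (N2 Nx h k W1 W2) m2 with hYdef
  set Z : ℝ := ipTM Nx Ny h k (fun a b => (v1 a b - u1 a b) / Δt) m1 with hZdef
  set W : ℝ := ipMT Nx Ny h k (fun a b => (v2 a b - u2 a b) / Δt) m2 with hWdef
  have hS2 : Qn1^2 - Qn^2 = Δt * (Q' / B * (X + Y) + (Z + W)) := by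
    have h2 : Qn1 - Qn = Δt * (1 / (2 * B) * (X + Y) + 1 / (2 * Q') * (Z + W)) := by
      rw [← hSAV]
      field_simp
    calc Qn1^2 - Qn^2 = (2*Q') * (Qn1 - Qn) := by rw [hQdef]; ring
      _ = (2*Q') * (Δt * (1 / (2 * B) * (X + Y) + 1 / (2 * Q') * (Z + W))) := by rw [h2]
      _ = Δt * (Q' / B * (X + Y) + (Z + W)) := by
          field_simp
  -- conclusion
  rw [sq_abs, sq_abs]
  simp only [Dsq]
  linear_combination hS2 + Δt * hE1 + Δt * hE2 + ν * Δt * hA1 + ν * Δt * hA2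
    + ν * Δt * hA3 + ν * Δt * hA4 - Δt * hC
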